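/- arXiv:1010.3039 — 3 statements merged into one kernel-verified Lean document; each statement's English description precedes it below -/
import Mathlib

section
/- Over the alphabet A = {x, y}, the 2-variable languages L_1 = {(x^n y x^m, x^k y x^n) : n, m, k >= 0} and L_2 = {(x^n y x^m, x^n y x^k) : n, m, k >= 0} are both quasi-regular (and hence weakly regular), but their intersection L_1 intersect L_2 = {(x^n y x^m, x^n y x^n) : n, m >= 0} is not weakly regular. In particular, weakly regular languages are not closed under intersection. -/
/-- An `n`-tape semi-sorted (deterministic) asynchronous automaton over `A`:
a partial deterministic finite state automaton over `A ∪ {$}` (unique start state,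
no `ε`-transitions, at most one transition from each state for each letter; the
padding symbol `$` is modelled by `none : Option A`), together with a partition of
its states into `n` sets (recorded by `tape`, where `tape s = i` means `s ∈ S_i`). -/
structure SemiSortedAA (A : Type) (n : ℕ) where
  State : Type
  fintype : Fintype State
  start : State
  accept : Set State
  /-- partial deterministic transition function over the alphabet `A ∪ {$}` -/
  step : State → Option A → Option State
  /-- the index `i` such that the state lies in `S_i` -/
  tape : State → Fin n

namespace SemiSortedAA

variable {A : Type} {n : ℕ}

/-- `M.Run s r f` : starting in state `s` with remaining (still unread) content `r i`
on the `i`-th tape, the automaton can consume all the remaining content and end in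
state `f`, where from a state `s` it reads the next letter of tape `M.tape s`.
This is exactly the existence of a shuffle of the tape contents labelling a path
from `s` to `f` in which every letter originating from the `i`-th tape is read
while the automaton is in a state of `S_i`. -/
inductive Run (M : SemiSortedAA A n) :
    M.State → (Fin n → List (Option A)) → M.State → Prop
  | nil (s : M.State) : Run M s (fun _ => []) s
  | step {s t f : M.State} {c : Option A} {rest : List (Option A)}
      {r : Fin n → List (Option A)}
      (h : M.step s c = some t)
      (hr : r (M.tape s) = c :: rest)
      (hrun : Run M t (Function.update r (M.tape s) rest) f) :
      Run M s r f

/-- `M` accepts the tuple of words `(w 1, …, w n)` if some shuffle of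
`(w 1 $, …, w n $)` labels a path from the start state to an accept state,
each letter from the `i`-th word (including its terminal `$`) being read in `S_i`. -/
def Accepts (M : SemiSortedAA A n) (w : Fin n → List A) : Prop :=
  ∃ f ∈ M.accept, M.Run M.start (fun i => (w i).map some ++ [none]) f

end SemiSortedAA

/-- An `n`-variable language is quasi-regular if it is the language accepted by some
`n`-tape semi-sorted asynchronous automaton. -/
def IsQuasiRegular {A : Type} {n : ℕ} (L : Set (Fin n → List A)) : Prop :=
  ∃ M : SemiSortedAA A n, ∀ w, w ∈ L ↔ M.Accepts w

/-- An `n`-tape non-deterministic semi-sorted asynchronous automaton (SAA) over `A`: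
a non-deterministic finite state automaton over `A ∪ {$}` (possibly with
`ε`-transitions and several start states; the padding symbol `$` is modelled by
`none : Option A`) together with a partition of its state set into `n` sets
(recorded by `tape`, where `tape s = i` means `s ∈ S_i`). -/
structure SAA (A : Type) (n : ℕ) where
  State : Type
  fintype : Fintype State
  start : Set State
  accept : Set State
  /-- non-deterministic transitions labelled by letters of `A ∪ {$}` -/
  step : State → Option A → Set State
  /-- `ε`-transitions -/
  eps : State → Set State
  /-- the index `i` such that the state lies in `S_i` -/
  tape : State → Fin n

namespace SAA

variable {A : Type} {n : ℕ}

/-- Runs of a non-deterministic semi-sorted asynchronous automaton: `M.Run s r f`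
means that starting at `s` with remaining content `r i` on the `i`-th tape, the
automaton can consume all the remaining content and end at `f`, reading from tape
`M.tape s` when in state `s` (this is the existence of an appropriate shuffle). -/
inductive Run (M : SAA A n) :
    M.State → (Fin n → List (Option A)) → M.State → Prop
  | nil (s : M.State) : Run M s (fun _ => []) s
  | eps {s t f : M.State} {r : Fin n → List (Option A)}
      (h : t ∈ M.eps s) (hrun : Run M t r f) : Run M s r f
  | step {s t f : M.State} {c : Option A} {rest : List (Option A)}
      {r : Fin n → List (Option A)}
      (h : t ∈ M.step s c)
      (hr : r (M.tape s) = c :: rest)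
      (hrun : Run M t (Function.update r (M.tape s) rest) f) :
      Run M s r f

/-- The SAA accepts `(w 1, …, w n)` if some shuffle of `(w 1 $, …, w n $)` labels a
path from a start state to an accept state, each letter from the `i`-th word being
read while the automaton is in a state of `S_i`. -/
def Accepts (M : SAA A n) (w : Fin n → List A) : Prop :=
  ∃ s₀ ∈ M.start, ∃ f ∈ M.accept,
    M.Run s₀ (fun i => (w i).map some ++ [none]) f

end SAA

/-- An `n`-variable language is weakly regular if it is the language accepted by some
`n`-tape non-deterministic semi-sorted asynchronous automaton. -/
def IsWeaklyRegular {A : Type} {n : ℕ} (L : Set (Fin n → List A)) : Prop :=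
  ∃ M : SAA A n, ∀ w, w ∈ L ↔ M.Accepts w

/-- Over the alphabet `{x, y}` (modelled by `Fin 2`, `x = 0`, `y = 1`), the
language `L₁ = {(x^n y x^m, x^k y x^n)}`. -/
def L₁ : Set (Fin 2 → List (Fin 2)) :=
  { w | ∃ n m k : ℕ,
      w 0 = List.replicate n 0 ++ 1 :: List.replicate m 0 ∧
      w 1 = List.replicate k 0 ++ 1 :: List.replicate n 0 }

/-- Over the alphabet `{x, y}`, the language `L₂ = {(x^n y x^m, x^n y x^k)}`. -/
def L₂ : Set (Fin 2 → List (Fin 2)) :=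
  { w | ∃ n m k : ℕ,
      w 0 = List.replicate n 0 ++ 1 :: List.replicate m 0 ∧
      w 1 = List.replicate n 0 ++ 1 :: List.replicate k 0 }

/-! The languages `L₁` and `L₂` are accepted by deterministic automata that read the block
`x^n` shared by the two words alternately from the two tapes.

Suppose an SAA accepts `L₁ ∩ L₂`. An accepting run on `(x^n y, x^n y x^n)` is a path labelled by
a word over tape-tagged letters. After the `y` of tape 1 this word still has more than `n` letters,
and the whole word has only four letters other than `x`; so for `n` large two prefixes in that
part reach the same state having read the same number of non-`x` letters. Cutting out the infix
between them deletes at least one `x`, none of them before the `y` on tape 1, and yields an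
accepted pair `(x^(n-d₀) y, x^n y x^(n-d₁))` with `d₀ + d₁ > 0`, which is not in `L₁ ∩ L₂`. -/

section Projection

variable {n : ℕ} {B : Type*}

/- A shuffle of the tape contents is recorded as a word of letters tagged by their tape;
`proj i` reads off the contribution of tape `i`. -/
def proj (i : Fin n) (u : List (Fin n × B)) : List B :=
  u.filterMap fun b => if b.1 = i then some b.2 else none

@[simp]
theorem proj_nil (i : Fin n) : proj i ([] : List (Fin n × B)) = [] := rfl

theorem proj_cons (i : Fin n) (b : Fin n × B) (u : List (Fin n × B)) :
    proj i (b :: u) = if b.1 = i then b.2 :: proj i u else proj i u := by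
  by_cases h : b.1 = i <;> simp [proj, h]

@[simp]
theorem proj_append (i : Fin n) (u v : List (Fin n × B)) :
    proj i (u ++ v) = proj i u ++ proj i v :=
  List.filterMap_append

theorem mem_proj {i : Fin n} {c : B} {u : List (Fin n × B)} : c ∈ proj i u ↔ (i, c) ∈ u := by
  simp [proj, and_comm, eq_comm]

theorem length_proj_le (i : Fin n) (u : List (Fin n × B)) : (proj i u).length ≤ u.length :=
  List.length_filterMap_le _ _

theorem proj_eq_append_iff {i : Fin n} {u : List (Fin n × B)} {l₁ l₂ : List B} :
    proj i u = l₁ ++ l₂ ↔ ∃ u₁ u₂, u = u₁ ++ u₂ ∧ proj i u₁ = l₁ ∧ proj i u₂ = l₂ :=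
  List.filterMap_eq_append_iff

theorem sum_countP_proj (p : B → Bool) (u : List (Fin n × B)) :
    ∑ i, (proj i u).countP p = u.countP fun b => p b.2 := by
  induction u with
  | nil => simp
  | cons b u ih =>
    have hcons (i : Fin n) : (proj i (b :: u)).countP p =
        (proj i u).countP p + if b.1 = i then (if p b.2 then 1 else 0) else 0 := by
      by_cases h : b.1 = i <;> simp [proj_cons, h, List.countP_cons]
    simp [hcons, Finset.sum_add_distrib, ih, List.countP_cons]

theorem proj_eq_replicate {i : Fin n} {u : List (Fin n × B)} {c : B} (h : ∀ b ∈ u, b.2 = c) :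
    proj i u = List.replicate (proj i u).length c :=
  List.eq_replicate_iff.2 ⟨rfl, fun _ hb => h _ (mem_proj.1 hb)⟩

end Projection

namespace SAA

variable {A : Type} {n : ℕ} {M : SAA A n}

inductive Path (M : SAA A n) : M.State → List (Fin n × Option A) → M.State → Prop
  | nil (s : M.State) : Path M s [] s
  | eps {s t f : M.State} {u : List (Fin n × Option A)}
      (h : t ∈ M.eps s) (hp : Path M t u f) : Path M s u f
  | step {s t f : M.State} {c : Option A} {u : List (Fin n × Option A)}
      (h : t ∈ M.step s c) (hp : Path M t u f) : Path M s ((M.tape s, c) :: u) f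

theorem Path.append {s m f : M.State} {u v : List (Fin n × Option A)}
    (h₁ : M.Path s u m) (h₂ : M.Path m v f) : M.Path s (u ++ v) f := by
  induction h₁ with
  | nil => exact h₂
  | eps h _ ih => exact .eps h (ih h₂)
  | step h _ ih => exact .step h (ih h₂)

theorem Path.of_append {s f : M.State} {u v : List (Fin n × Option A)}
    (h : M.Path s (u ++ v) f) : ∃ m, M.Path s u m ∧ M.Path m v f := by
  generalize huv : u ++ v = w at h
  induction h generalizing u with
  | nil s =>
    obtain ⟨rfl, rfl⟩ := List.append_eq_nil_iff.mp huv
    exact ⟨s, .nil s, .nil s⟩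
  | eps h _ ih =>
    obtain ⟨m, h₁, h₂⟩ := ih huv
    exact ⟨m, .eps h h₁, h₂⟩
  | @step s t f c w h hp ih =>
    cases u with
    | nil =>
      rw [List.nil_append] at huv
      exact ⟨s, .nil s, huv ▸ .step h hp⟩
    | cons b u =>
      simp only [List.cons_append, List.cons.injEq] at huv
      obtain ⟨rfl, huv⟩ := huv
      obtain ⟨m, h₁, h₂⟩ := ih huv
      exact ⟨m, .step h h₁, h₂⟩

theorem run_iff_exists_path {s f : M.State} {r : Fin n → List (Option A)} :
    M.Run s r f ↔ ∃ u, M.Path s u f ∧ ∀ i, proj i u = r i := by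
  constructor
  · intro h
    induction h with
    | nil s => exact ⟨[], .nil s, fun _ => rfl⟩
    | eps h _ ih =>
      obtain ⟨u, hp, hu⟩ := ih
      exact ⟨u, .eps h hp, hu⟩
    | @step s t f c rest r h hr _ ih =>
      obtain ⟨u, hp, hu⟩ := ih
      refine ⟨(M.tape s, c) :: u, .step h hp, fun i => ?_⟩
      by_cases hi : M.tape s = i
      · subst hi; simp [proj_cons, hu, hr]
      · simp [proj_cons, hi, hu, Function.update_of_ne (Ne.symm hi)]
  · rintro ⟨u, hp, hu⟩
    induction hp generalizing r with
    | nil s =>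
      obtain rfl : r = fun _ => [] := funext fun i => (hu i).symm
      exact .nil s
    | eps h _ ih => exact .eps h (ih hu)
    | @step s t f c u h _ ih =>
      refine .step h (rest := proj (M.tape s) u) (by simp [← hu, proj_cons]) (ih fun i => ?_)
      by_cases hi : i = M.tape s
      · subst hi; simp
      · simp [Function.update_of_ne hi, ← hu, proj_cons, Ne.symm hi]

open Finset in
theorem Path.exists_pump_down [Fintype M.State] {s f : M.State} {u : List (Fin n × Option A)}
    (hp : M.Path s u f) (c : List (Fin n × Option A) → ℕ) {B : ℕ}
    (hc : ∀ k, c (u.take k) < B) (hlen : Fintype.card M.State * B ≤ u.length) :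
    ∃ a b d, u = a ++ b ++ d ∧ b ≠ [] ∧ c a = c (a ++ b) ∧ M.Path s (a ++ d) f := by
  have hsplit (k : ℕ) : ∃ m, M.Path s (u.take k) m ∧ M.Path m (u.drop k) f := by
    rw [← List.take_append_drop k u] at hp
    exact hp.of_append
  choose g hg using hsplit
  obtain ⟨i, hi, j, hj, hne, hij⟩ := exists_ne_map_eq_of_card_lt_of_maps_to
    (s := range (u.length + 1)) (t := univ ×ˢ range B) (f := fun k => (g k, c (u.take k)))
    (by simp; omega) (fun k _ => by simp [hc])
  wlog hlt : i < j generalizing i j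
  · exact this j hj i hi hne.symm hij.symm (by omega)
  rw [mem_range] at hj
  rw [Prod.mk.injEq] at hij
  have htake : u.take i ++ (u.drop i).take (j - i) = u.take j := by
    rw [← List.take_add, Nat.add_sub_cancel' hlt.le]
  refine ⟨u.take i, (u.drop i).take (j - i), u.drop j, ?_, ?_, ?_, ?_⟩
  · rw [htake, List.take_append_drop]
  · simp only [ne_eq, List.take_eq_nil_iff, List.drop_eq_nil_iff]
    omega
  · rw [htake, hij.2]
  · exact (hg i).1.append (hij.1 ▸ (hg j).2)

end SAA

namespace SemiSortedAA

variable {A : Type} {n : ℕ} {M : SemiSortedAA A n}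

theorem exists_run_iff_of_invariant (G : M.State → (Fin n → List (Option A)) → Prop)
    (final : ∀ f ∈ M.accept, G f fun _ => [])
    (back : ∀ {s t c rest r}, M.step s c = some t → r (M.tape s) = c :: rest →
      G t (Function.update r (M.tape s) rest) → G s r)
    (forth : ∀ {s r}, G s r → (s ∈ M.accept ∧ r = fun _ => []) ∨
      ∃ c rest t, M.step s c = some t ∧ r (M.tape s) = c :: rest ∧
        G t (Function.update r (M.tape s) rest))
    {s : M.State} {r : Fin n → List (Option A)} :
    (∃ f ∈ M.accept, M.Run s r f) ↔ G s r := by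
  constructor
  · rintro ⟨f, hf, h⟩
    induction h with
    | nil => exact final _ hf
    | step hst hr _ ih => exact back hst hr (ih hf)
  · induction hN : ∑ i, (r i).length using Nat.strong_induction_on generalizing s r with
    | _ N ih =>
      intro hG
      rcases forth hG with ⟨hs, rfl⟩ | ⟨c, rest, t, hst, hr, hG'⟩
      · exact ⟨s, hs, .nil s⟩
      · have hlt : ∑ i, (Function.update r (M.tape s) rest i).length < N := by
          rw [← hN]
          apply Finset.sum_lt_sum
          · intro i _
            by_cases hi : i = M.tape s
            · subst hi; simp [hr]
            · simp [Function.update_of_ne hi]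
          · exact ⟨M.tape s, Finset.mem_univ _, by simp [hr]⟩
        obtain ⟨f, hf, hrun⟩ := ih _ hlt rfl hG'
        exact ⟨f, hf, .step hst hr hrun⟩

def toSAA (M : SemiSortedAA A n) : SAA A n where
  State := M.State
  fintype := M.fintype
  start := {M.start}
  accept := M.accept
  step s c := {t | M.step s c = some t}
  eps _ := ∅
  tape := M.tape

theorem toSAA_run_iff {s f : M.toSAA.State} {r : Fin n → List (Option A)} :
    M.toSAA.Run s r f ↔ M.Run s r f := by
  constructor
  · intro h
    induction h with
    | nil s => exact .nil s
    | eps h => exact absurd h (Set.notMem_empty _)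
    | step h hr _ ih => exact .step h hr ih
  · intro h
    induction h with
    | nil s => exact SAA.Run.nil (M := M.toSAA) s
    | step h hr _ ih => exact .step h hr ih

end SemiSortedAA

theorem IsQuasiRegular.isWeaklyRegular {A : Type} {n : ℕ} {L : Set (Fin n → List A)}
    (h : IsQuasiRegular L) : IsWeaklyRegular L := by
  obtain ⟨M, hM⟩ := h
  exact ⟨M.toSAA, fun w => (hM w).trans
    ⟨fun ⟨f, hf, h⟩ => ⟨M.start, rfl, f, hf, SemiSortedAA.toSAA_run_iff.2 h⟩,
    fun ⟨_, rfl, f, hf, h⟩ => ⟨f, hf, SemiSortedAA.toSAA_run_iff.1 h⟩⟩⟩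

namespace List

variable {α : Type*}

theorem replicate_append_cons_inj {z w : α} (hzw : z ≠ w) {a b : ℕ} {u v : List α} :
    replicate a z ++ w :: u = replicate b z ++ w :: v ↔ a = b ∧ u = v := by
  refine ⟨fun h => ?_, fun ⟨rfl, rfl⟩ => rfl⟩
  induction a generalizing b with
  | zero => cases b <;> simp_all [replicate_succ, eq_comm]
  | succ a ih => cases b <;> simp_all [replicate_succ]

theorem append_eq_replicate_sub_append {z : α} {tail p q : List α} {e m : ℕ} (hz : z ∉ tail)
    (h : p ++ replicate e z ++ q = replicate m z ++ tail) :
    e ≤ m ∧ p ++ q = replicate (m - e) z ++ tail := by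
  induction m generalizing p e with
  | zero =>
    cases e with
    | zero => simpa using h
    | succ e =>
      rw [replicate_zero, nil_append] at h
      exact absurd (h ▸ by simp [replicate_succ]) hz
  | succ m ih =>
    cases p with
    | nil =>
      cases e with
      | zero => simpa using h
      | succ e =>
        simp only [replicate_succ, nil_append, cons_append, cons.injEq, true_and] at h
        simpa using ih (p := []) h
    | cons a p =>
      simp only [replicate_succ, cons_append, cons.injEq] at h
      obtain ⟨rfl, h⟩ := h
      obtain ⟨he, hpq⟩ := ih h
      refine ⟨by omega, ?_⟩
      rw [Nat.sub_add_comm he, replicate_succ, cons_append, hpq, cons_append]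

theorem map_some_append_none_eq_iff {l : List α} {x y : α} {a b : ℕ} :
    l.map some ++ [none] = replicate a (some x) ++ some y :: (replicate b (some x) ++ [none]) ↔
      l = replicate a x ++ y :: replicate b x := by
  have : replicate a (some x) ++ some y :: (replicate b (some x) ++ [none]) =
      (replicate a x ++ y :: replicate b x).map some ++ [none] := by simp
  rw [this, append_cancel_right_eq, (map_injective_iff.2 (Option.some_injective α)).eq_iff]

end List

open List

inductive Q6 | q0 | q1 | q2 | q3 | q4 | q5
  deriving DecidableEq

instance : Fintype Q6 :=
  ⟨{.q0, .q1, .q2, .q3, .q4, .q5}, fun q => by cases q <;> simp⟩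

/- Reads `x^k y` on tape 1, then `x^n` alternately on tapes 0 and 1, then `y x^m $` on tape 0
and finally `$` on tape 1. -/
def autL₁ : SemiSortedAA (Fin 2) 2 where
  State := Q6
  fintype := inferInstance
  start := .q0
  accept := {.q5}
  step
    | .q0, some 0 => some .q0
    | .q0, some 1 => some .q1
    | .q1, some 0 => some .q2
    | .q1, some 1 => some .q3
    | .q2, some 0 => some .q1
    | .q3, some 0 => some .q3
    | .q3, none => some .q4
    | .q4, none => some .q5
    | _, _ => none
  tape
    | .q0 | .q2 | .q4 => 1
    | .q1 | .q3 | .q5 => 0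

def invL₁ : Q6 → (Fin 2 → List (Option (Fin 2))) → Prop
  | .q0, r => ∃ n m k, r 0 = replicate n (some 0) ++ some 1 :: replicate m (some 0) ++ [none] ∧
      r 1 = replicate k (some 0) ++ some 1 :: replicate n (some 0) ++ [none]
  | .q1, r => ∃ n m, r 0 = replicate n (some 0) ++ some 1 :: replicate m (some 0) ++ [none] ∧
      r 1 = replicate n (some 0) ++ [none]
  | .q2, r => ∃ n m, r 0 = replicate n (some 0) ++ some 1 :: replicate m (some 0) ++ [none] ∧
      r 1 = replicate (n + 1) (some 0) ++ [none]
  | .q3, r => ∃ m, r 0 = replicate m (some 0) ++ [none] ∧ r 1 = [none]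
  | .q4, r => r 0 = [] ∧ r 1 = [none]
  | .q5, r => r 0 = [] ∧ r 1 = []

theorem invL₁_back {s t : Q6} {c : Option (Fin 2)} {rest} {r}
    (hst : autL₁.step s c = some t) (hr : r (autL₁.tape s) = c :: rest)
    (hG : invL₁ t (Function.update r (autL₁.tape s) rest)) : invL₁ s r := by
  cases s <;> rcases c with _ | c <;> try fin_cases c
  all_goals simp [autL₁] at hst
  all_goals subst hst; simp [autL₁, invL₁] at hr hG ⊢
  -- one goal per transition, ordered by state and then by letter, `$` first
  · obtain ⟨n, ⟨m, h₀⟩, k, rfl⟩ := hG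
    exact ⟨n, ⟨m, h₀⟩, k + 1, by simp [hr, replicate_succ]⟩
  · obtain ⟨n, ⟨m, h₀⟩, rfl⟩ := hG
    exact ⟨n, ⟨m, h₀⟩, 0, by simp [hr]⟩
  · obtain ⟨n, ⟨m, rfl⟩, h₁⟩ := hG
    exact ⟨n + 1, ⟨m, by simp [hr, replicate_succ]⟩, h₁⟩
  · obtain ⟨⟨m, rfl⟩, h₁⟩ := hG
    exact ⟨0, ⟨m, by simp [hr]⟩, by simp [h₁]⟩
  · obtain ⟨n, ⟨m, h₀⟩, rfl⟩ := hG
    exact ⟨n, ⟨m, h₀⟩, by simp [hr, replicate_succ]⟩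
  · obtain ⟨rfl, h₁⟩ := hG
    exact ⟨⟨0, by simp [hr]⟩, h₁⟩
  · obtain ⟨⟨m, rfl⟩, h₁⟩ := hG
    exact ⟨⟨m + 1, by simp [hr, replicate_succ]⟩, h₁⟩
  · obtain ⟨h₀, rfl⟩ := hG
    exact ⟨h₀, hr⟩

theorem invL₁_forth {s : Q6} {r} (hG : invL₁ s r) :
    (s ∈ autL₁.accept ∧ r = fun _ => []) ∨ ∃ c rest t, autL₁.step s c = some t ∧
      r (autL₁.tape s) = c :: rest ∧ invL₁ t (Function.update r (autL₁.tape s) rest) := by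
  cases s
  · obtain ⟨n, m, k | k, h₀, h₁⟩ := hG
    · exact .inr ⟨some 1, replicate n (some 0) ++ [none], .q1, rfl, by simp [autL₁, h₁],
        n, m, by simp [autL₁, h₀], by simp [autL₁]⟩
    · exact .inr ⟨some 0, replicate k (some 0) ++ some 1 :: replicate n (some 0) ++ [none], .q0,
        rfl, by simp [autL₁, h₁, replicate_succ], n, m, k, by simp [autL₁, h₀], by simp [autL₁]⟩
  · obtain ⟨n | n, m, h₀, h₁⟩ := hG
    · exact .inr ⟨some 1, replicate m (some 0) ++ [none], .q3, rfl, by simp [autL₁, h₀],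
        m, by simp [autL₁], by simp [autL₁, h₁]⟩
    · exact .inr ⟨some 0, replicate n (some 0) ++ some 1 :: replicate m (some 0) ++ [none], .q2,
        rfl, by simp [autL₁, h₀, replicate_succ], n, m, by simp [autL₁], by simp [autL₁, h₁]⟩
  · obtain ⟨n, m, h₀, h₁⟩ := hG
    exact .inr ⟨some 0, replicate n (some 0) ++ [none], .q1, rfl,
      by simp [autL₁, h₁, replicate_succ], n, m, by simp [autL₁, h₀], by simp [autL₁]⟩
  · obtain ⟨m | m, h₀, h₁⟩ := hG
    · exact .inr ⟨none, [], .q4, rfl, by simp [autL₁, h₀], by simp [autL₁], by simp [autL₁, h₁]⟩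
    · exact .inr ⟨some 0, replicate m (some 0) ++ [none], .q3, rfl,
        by simp [autL₁, h₀, replicate_succ], m, by simp [autL₁], by simp [autL₁, h₁]⟩
  · obtain ⟨h₀, h₁⟩ := hG
    exact .inr ⟨none, [], .q5, rfl, by simp [autL₁, h₁], by simp [autL₁, h₀], by simp [autL₁]⟩
  · obtain ⟨h₀, h₁⟩ := hG
    exact .inl ⟨rfl, funext fun i => by fin_cases i <;> assumption⟩

theorem isQuasiRegular_L₁ : IsQuasiRegular L₁ := by
  refine ⟨autL₁, fun w => ?_⟩
  rw [SemiSortedAA.Accepts, SemiSortedAA.exists_run_iff_of_invariant invL₁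
    (by rintro f rfl; exact ⟨rfl, rfl⟩) invL₁_back invL₁_forth]
  simp [L₁, invL₁, autL₁, map_some_append_none_eq_iff]

/- Reads `x^n` alternately on tapes 0 and 1, then `y` on tape 0 and on tape 1, then `x^m $` on
tape 0 and finally `x^k $` on tape 1. -/
def autL₂ : SemiSortedAA (Fin 2) 2 where
  State := Q6
  fintype := inferInstance
  start := .q0
  accept := {.q5}
  step
    | .q0, some 0 => some .q1
    | .q0, some 1 => some .q2
    | .q1, some 0 => some .q0
    | .q2, some 1 => some .q3
    | .q3, some 0 => some .q3
    | .q3, none => some .q4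
    | .q4, some 0 => some .q4
    | .q4, none => some .q5
    | _, _ => none
  tape
    | .q1 | .q2 | .q4 => 1
    | .q0 | .q3 | .q5 => 0

def invL₂ : Q6 → (Fin 2 → List (Option (Fin 2))) → Prop
  | .q0, r => ∃ n m k, r 0 = replicate n (some 0) ++ some 1 :: replicate m (some 0) ++ [none] ∧
      r 1 = replicate n (some 0) ++ some 1 :: replicate k (some 0) ++ [none]
  | .q1, r => ∃ n m k, r 0 = replicate n (some 0) ++ some 1 :: replicate m (some 0) ++ [none] ∧
      r 1 = replicate (n + 1) (some 0) ++ some 1 :: replicate k (some 0) ++ [none]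
  | .q2, r => ∃ m k, r 0 = replicate m (some 0) ++ [none] ∧
      r 1 = some 1 :: replicate k (some 0) ++ [none]
  | .q3, r => ∃ m k, r 0 = replicate m (some 0) ++ [none] ∧ r 1 = replicate k (some 0) ++ [none]
  | .q4, r => ∃ k, r 0 = [] ∧ r 1 = replicate k (some 0) ++ [none]
  | .q5, r => r 0 = [] ∧ r 1 = []

theorem invL₂_back {s t : Q6} {c : Option (Fin 2)} {rest} {r}
    (hst : autL₂.step s c = some t) (hr : r (autL₂.tape s) = c :: rest)
    (hG : invL₂ t (Function.update r (autL₂.tape s) rest)) : invL₂ s r := by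
  cases s <;> rcases c with _ | c <;> try fin_cases c
  all_goals simp [autL₂] at hst
  all_goals subst hst; simp [autL₂, invL₂] at hr hG ⊢
  · obtain ⟨n, ⟨m, rfl⟩, k, h₁⟩ := hG
    exact ⟨n + 1, ⟨m, by simp [hr, replicate_succ]⟩, k, h₁⟩
  · obtain ⟨⟨m, rfl⟩, k, h₁⟩ := hG
    exact ⟨0, ⟨m, by simp [hr]⟩, k, by simp [h₁]⟩
  · obtain ⟨n, ⟨m, h₀⟩, k, rfl⟩ := hG
    exact ⟨n, ⟨m, h₀⟩, k, by simp [hr, replicate_succ]⟩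
  · obtain ⟨h₀, k, rfl⟩ := hG
    exact ⟨h₀, k, hr⟩
  · obtain ⟨rfl, h₁⟩ := hG
    exact ⟨⟨0, by simp [hr]⟩, h₁⟩
  · obtain ⟨⟨m, rfl⟩, h₁⟩ := hG
    exact ⟨⟨m + 1, by simp [hr, replicate_succ]⟩, h₁⟩
  · obtain ⟨h₀, rfl⟩ := hG
    exact ⟨h₀, 0, by simp [hr]⟩
  · obtain ⟨h₀, k, rfl⟩ := hG
    exact ⟨h₀, k + 1, by simp [hr, replicate_succ]⟩

theorem invL₂_forth {s : Q6} {r} (hG : invL₂ s r) :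
    (s ∈ autL₂.accept ∧ r = fun _ => []) ∨ ∃ c rest t, autL₂.step s c = some t ∧
      r (autL₂.tape s) = c :: rest ∧ invL₂ t (Function.update r (autL₂.tape s) rest) := by
  cases s
  · obtain ⟨n | n, m, k, h₀, h₁⟩ := hG
    · exact .inr ⟨some 1, replicate m (some 0) ++ [none], .q2, rfl, by simp [autL₂, h₀],
        m, k, by simp [autL₂], by simp [autL₂, h₁]⟩
    · exact .inr ⟨some 0, replicate n (some 0) ++ some 1 :: replicate m (some 0) ++ [none], .q1,
        rfl, by simp [autL₂, h₀, replicate_succ], n, m, k, by simp [autL₂], by simp [autL₂, h₁]⟩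
  · obtain ⟨n, m, k, h₀, h₁⟩ := hG
    exact .inr ⟨some 0, replicate n (some 0) ++ some 1 :: replicate k (some 0) ++ [none], .q0,
      rfl, by simp [autL₂, h₁, replicate_succ], n, m, k, by simp [autL₂, h₀], by simp [autL₂]⟩
  · obtain ⟨m, k, h₀, h₁⟩ := hG
    exact .inr ⟨some 1, replicate k (some 0) ++ [none], .q3, rfl, by simp [autL₂, h₁],
      m, k, by simp [autL₂, h₀], by simp [autL₂]⟩
  · obtain ⟨m | m, k, h₀, h₁⟩ := hG
    · exact .inr ⟨none, [], .q4, rfl, by simp [autL₂, h₀], k, by simp [autL₂],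
        by simp [autL₂, h₁]⟩
    · exact .inr ⟨some 0, replicate m (some 0) ++ [none], .q3, rfl,
        by simp [autL₂, h₀, replicate_succ], m, k, by simp [autL₂], by simp [autL₂, h₁]⟩
  · obtain ⟨k | k, h₀, h₁⟩ := hG
    · exact .inr ⟨none, [], .q5, rfl, by simp [autL₂, h₁], by simp [autL₂, h₀], by simp [autL₂]⟩
    · exact .inr ⟨some 0, replicate k (some 0) ++ [none], .q4, rfl,
        by simp [autL₂, h₁, replicate_succ], k, by simp [autL₂, h₀], by simp [autL₂]⟩
  · obtain ⟨h₀, h₁⟩ := hG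
    exact .inl ⟨rfl, funext fun i => by fin_cases i <;> assumption⟩

theorem isQuasiRegular_L₂ : IsQuasiRegular L₂ := by
  refine ⟨autL₂, fun w => ?_⟩
  rw [SemiSortedAA.Accepts, SemiSortedAA.exists_run_iff_of_invariant invL₂
    (by rintro f rfl; exact ⟨rfl, rfl⟩) invL₂_back invL₂_forth]
  simp [L₂, invL₂, autL₂, map_some_append_none_eq_iff]

theorem L₁_inter_L₂ : L₁ ∩ L₂ =
    { w : Fin 2 → List (Fin 2) | ∃ n m : ℕ,
        w 0 = replicate n 0 ++ 1 :: replicate m 0 ∧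
        w 1 = replicate n 0 ++ 1 :: replicate n 0 } := by
  ext w
  constructor
  · rintro ⟨⟨n, m, k, h₀, h₁⟩, n', m', k', h₀', h₁'⟩
    obtain ⟨rfl, -⟩ := (replicate_append_cons_inj (by decide)).1 (h₀.symm.trans h₀')
    obtain ⟨rfl, -⟩ := (replicate_append_cons_inj (by decide)).1 (h₁.symm.trans h₁')
    exact ⟨_, _, h₀, h₁⟩
  · rintro ⟨n, m, h₀, h₁⟩
    exact ⟨⟨n, m, n, h₀, h₁⟩, n, m, n, h₀, h₁⟩

theorem SAA.Path.exists_pump_down_xy {M : SAA (Fin 2) 2} [Fintype M.State] {s f : M.State}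
    {u : List (Fin 2 × Option (Fin 2))} (hp : M.Path s u f) {n : ℕ}
    (hn : 5 * Fintype.card M.State ≤ n + 1)
    (h₀ : proj 0 u = replicate n (some 0) ++ [some 1, none])
    (h₁ : proj 1 u = replicate n (some 0) ++ some 1 :: (replicate n (some 0) ++ [none])) :
    ∃ v d₀ d₁, M.Path s v f ∧ 0 < d₀ + d₁ ∧ d₀ ≤ n ∧ d₁ ≤ n ∧
      proj 0 v = replicate (n - d₀) (some 0) ++ [some 1, none] ∧
      proj 1 v = replicate n (some 0) ++ some 1 :: (replicate (n - d₁) (some 0) ++ [none]) := by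
  obtain ⟨u₁, u₂, hu, hu₁, hu₂⟩ := proj_eq_append_iff.1
    (h₁.trans (append_cons _ (some 1) _) : proj 1 u = (replicate n (some 0) ++ [some 1]) ++ _)
  obtain ⟨t, hp₁, hp₂⟩ := (hu ▸ hp).of_append
  have hcolour (k : ℕ) : (u₂.take k).countP (fun b => b.2 ≠ some 0) < 5 := by
    have htotal : u.countP (fun b => b.2 ≠ some 0) = 4 := by
      rw [← sum_countP_proj (fun c => decide (c ≠ some 0)), Fin.sum_univ_two, h₀, h₁]
      simp [countP_append, countP_replicate]
    have hsub : (u₂.take k).Sublist u := hu ▸ (take_sublist k u₂).trans (sublist_append_right _ _)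
    have := hsub.countP_le (p := fun b => b.2 ≠ some 0)
    omega
  have hlen : Fintype.card M.State * 5 ≤ u₂.length := by
    have := hu₂ ▸ length_proj_le 1 u₂
    simp at this
    omega
  obtain ⟨a, b, d, rfl, hb, hab, hcut⟩ := hp₂.exists_pump_down _ hcolour hlen
  have hbx : ∀ x ∈ b, x.2 = some 0 := by
    rw [countP_append] at hab
    simpa [countP_eq_zero] using hab
  have hd : 0 < (proj 0 b).length + (proj 1 b).length := by
    have := sum_countP_proj (fun _ => true) b
    simp only [Fin.sum_univ_two, countP_true] at this
    exact this ▸ length_pos_iff.2 hb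
  have e₀ : proj 0 u₁ ++ proj 0 a ++ replicate (proj 0 b).length (some 0) ++ proj 0 d =
      replicate n (some 0) ++ [some 1, none] := by
    rw [← h₀, hu, ← proj_eq_replicate hbx]
    simp
  have e₁ : proj 1 a ++ replicate (proj 1 b).length (some 0) ++ proj 1 d =
      replicate n (some 0) ++ [none] := by
    rw [← hu₂, ← proj_eq_replicate hbx]
    simp
  obtain ⟨hd₀, hv₀⟩ := append_eq_replicate_sub_append (by decide) e₀
  obtain ⟨hd₁, hv₁⟩ := append_eq_replicate_sub_append (by decide) e₁
  refine ⟨u₁ ++ (a ++ d), _, _, hp₁.append hcut, hd, hd₀, hd₁, ?_, ?_⟩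
  · simp [← hv₀]
  · simp [hu₁, ← hv₁]

theorem not_isWeaklyRegular_L₁_inter_L₂ : ¬ IsWeaklyRegular (L₁ ∩ L₂) := by
  rintro ⟨M, hM⟩
  let _ := M.fintype
  set n := 5 * Fintype.card M.State
  have hw : ![replicate n 0 ++ [1], replicate n 0 ++ 1 :: replicate n 0] ∈ L₁ ∩ L₂ := by
    rw [L₁_inter_L₂]
    exact ⟨n, 0, rfl, rfl⟩
  obtain ⟨s, hs, f, hf, hrun⟩ := (hM _).1 hw
  obtain ⟨u, hp, hu⟩ := SAA.run_iff_exists_path.1 hrun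
  obtain ⟨v, d₀, d₁, hv, hd, hd₀, hd₁, hv₀, hv₁⟩ :=
    hp.exists_pump_down_xy (n := n) (by omega) (by simp [hu]) (by simp [hu])
  have hw' : ![replicate (n - d₀) 0 ++ [1], replicate n 0 ++ 1 :: replicate (n - d₁) 0] ∈
      L₁ ∩ L₂ := (hM _).2 ⟨s, hs, f, hf, SAA.run_iff_exists_path.2
        ⟨v, hv, fun i => by fin_cases i <;> simp [hv₀, hv₁]⟩⟩
  rw [L₁_inter_L₂] at hw'
  obtain ⟨c, m, h₀, h₁⟩ := hw'
  obtain ⟨rfl, -⟩ := (replicate_append_cons_inj (by decide)).1 h₀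
  obtain ⟨hc, hrest⟩ := (replicate_append_cons_inj (by decide)).1 h₁
  have := congrArg length hrest
  simp only [length_replicate] at this
  omega

/-- `L₁` and `L₂` are quasi-regular (hence weakly regular), but their intersection
`L₁ ∩ L₂ = {(x^n y x^m, x^n y x^n)}` is not weakly regular: weakly regular
languages are not closed under intersection. -/
theorem weaklyRegular_not_closed_under_inter :
    IsQuasiRegular L₁ ∧ IsQuasiRegular L₂ ∧
    IsWeaklyRegular L₁ ∧ IsWeaklyRegular L₂ ∧
    L₁ ∩ L₂ =
      { w : Fin 2 → List (Fin 2) | ∃ n m : ℕ,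
          w 0 = List.replicate n 0 ++ 1 :: List.replicate m 0 ∧
          w 1 = List.replicate n 0 ++ 1 :: List.replicate n 0 } ∧
    ¬ IsWeaklyRegular (L₁ ∩ L₂) :=
  ⟨isQuasiRegular_L₁, isQuasiRegular_L₂, isQuasiRegular_L₁.isWeaklyRegular,
    isQuasiRegular_L₂.isWeaklyRegular, L₁_inter_L₂, not_isWeaklyRegular_L₁_inter_L₂⟩
end

section
/- There exist a finite alphabet A and a weakly regular 2-variable language L over A such that the complement (A*)^2 minus L is not weakly regular. In particular, weakly regular languages are not closed under complementation. -/
/-!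
Let `L` be the set of pairs `(u, v)` of binary words with `|u| ≠ |v|₀` or `|u| ≠ |v|₁`. An
automaton can guess the letter `b` and compare `|u|` with `|v|_b` by alternating between the
tapes, so `L` is weakly regular. Its complement contains `(0ⁿ, 0ⁿ1ⁿ)` for every `n`. Cut an
accepting run on it at the moment the second tape has read `0ⁿ`: the state reached and whether
the first tape has been read entirely take finitely many values, so they agree for some
`n ≠ m`, and splicing the two runs makes the automaton accept a pair `(x, 0ⁿ1ᵐ)`, which lies
in `L`.
-/

namespace SAA

variable {A : Type} {n : ℕ}

def pad (x : List A) : List (Option A) := x.map some ++ [none]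

@[simp] lemma pad_nil : pad ([] : List A) = [none] := rfl

@[simp] lemma pad_cons (a : A) (x : List A) : pad (a :: x) = some a :: pad x := rfl

lemma pad_append (x y : List A) : pad (x ++ y) = x.map some ++ pad y := by
  simp [pad]

@[simp] lemma none_mem_pad (x : List A) : none ∈ pad x := by
  simp [pad]

@[simp] lemma some_cons_eq_pad {a : A} {u : List (Option A)} {x : List A} :
    some a :: u = pad x ↔ ∃ x', x = a :: x' ∧ u = pad x' := by
  cases x <;> simp [eq_comm]

@[simp] lemma none_cons_eq_pad {u : List (Option A)} {x : List A} :
    none :: u = pad x ↔ x = [] ∧ u = [] := by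
  cases x <;> simp

lemma append_eq_pad {u₁ u₂ : List (Option A)} {x : List A} (h : u₁ ++ u₂ = pad x) :
    (u₁ = pad x ∧ u₂ = []) ∨ ∃ a b : List A, u₁ = a.map some ∧ u₂ = pad b := by
  induction u₁ generalizing x with
  | nil => exact Or.inr ⟨[], x, rfl, h⟩
  | cons c u₁ ih =>
    rw [List.cons_append] at h
    cases c with
    | none =>
      obtain ⟨rfl, hu⟩ := none_cons_eq_pad.1 h
      obtain ⟨rfl, rfl⟩ := List.append_eq_nil_iff.1 hu
      exact Or.inl ⟨rfl, rfl⟩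
    | some a =>
      obtain ⟨x, rfl, hu⟩ := some_cons_eq_pad.1 h
      rcases ih hu with ⟨rfl, rfl⟩ | ⟨a', b, rfl, rfl⟩
      · exact Or.inl ⟨rfl, rfl⟩
      · exact Or.inr ⟨a :: a', b, rfl, rfl⟩

lemma exists_append_eq_pad {u₁ u₂ v₁ v₂ : List (Option A)} {x y : List A}
    (hu : u₁ ++ u₂ = pad x) (hv : v₁ ++ v₂ = pad y) (hnone : none ∈ u₁ ↔ none ∈ v₁) :
    ∃ z, u₁ ++ v₂ = pad z := by
  rcases append_eq_pad hu with ⟨rfl, -⟩ | ⟨a, _, rfl, -⟩ <;>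
    rcases append_eq_pad hv with ⟨rfl, rfl⟩ | ⟨_, b, rfl, rfl⟩
  · exact ⟨x, List.append_nil _⟩
  · simp at hnone
  · simp at hnone
  · exact ⟨a ++ b, (pad_append a b).symm⟩

namespace Run

variable {M : SAA A n}

theorem append {s q f : M.State} {r₁ r₂ : Fin n → List (Option A)}
    (h₁ : M.Run s r₁ q) (h₂ : M.Run q r₂ f) : M.Run s (fun i => r₁ i ++ r₂ i) f := by
  induction h₁ with
  | nil => simpa using h₂
  | eps ht _ ih => exact eps ht (ih h₂)
  | @step s t f c rest r ht hr _ ih =>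
    refine step (rest := rest ++ r₂ (M.tape s)) ht (by simp [hr]) ?_
    convert ih h₂ using 1
    funext i
    exact (Function.apply_update (fun j l => l ++ r₂ j) _ _ _ i).symm

theorem exists_split {s f : M.State} {r : Fin n → List (Option A)} (h : M.Run s r f)
    (i : Fin n) {v₁ v₂ : List (Option A)} (hv : r i = v₁ ++ v₂) :
    ∃ q r₁ r₂, r = (fun j => r₁ j ++ r₂ j) ∧ r₁ i = v₁ ∧ r₂ i = v₂ ∧
      M.Run s r₁ q ∧ M.Run q r₂ f := by
  induction h generalizing v₁ with
  | nil s =>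
    obtain ⟨rfl, rfl⟩ := List.append_eq_nil_iff.1 hv.symm
    exact ⟨s, _, _, by simp, rfl, rfl, nil s, nil s⟩
  | eps ht _ ih =>
    obtain ⟨q, r₁, r₂, hr, h₁, h₂, hrun₁, hrun₂⟩ := ih hv
    exact ⟨q, r₁, r₂, hr, h₁, h₂, eps ht hrun₁, hrun₂⟩
  | @step s t f c rest r ht hr hrun ih =>
    rcases v₁ with _ | ⟨d, v₁⟩
    · exact ⟨s, fun _ => [], r, by simp, rfl, hv, nil s, step ht hr hrun⟩
    obtain ⟨v₁', hv', hv₁⟩ : ∃ v₁', Function.update r (M.tape s) rest i = v₁' ++ v₂ ∧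
        d :: v₁ = if i = M.tape s then c :: v₁' else v₁' := by
      by_cases hk : i = M.tape s
      · subst hk
        rw [hr, List.cons_append, List.cons_eq_cons] at hv
        exact ⟨v₁, by simp [hv.2], by simp [hv.1]⟩
      · exact ⟨d :: v₁, by simpa [Function.update_of_ne hk] using hv, by simp [hk]⟩
    obtain ⟨q, r₁, r₂, hr', h₁, h₂, hrun₁, hrun₂⟩ := ih hv'
    refine ⟨q, Function.update r₁ (M.tape s) (c :: r₁ (M.tape s)), r₂, ?_, ?_, h₂, ?_, hrun₂⟩
    · funext j
      by_cases hj : j = M.tape s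
      · subst hj
        simp [hr, ← congrFun hr' (M.tape s)]
      · simp [hj, ← congrFun hr' j]
    · by_cases hi : i = M.tape s <;> simp_all
    · exact step (rest := r₁ (M.tape s)) ht (by simp) (by simpa using hrun₁)

end Run

section TwoTapes

variable {M : SAA A 2}

lemma Run.step₀ {s t f : M.State} {c : Option A} {u v : List (Option A)}
    (ht : t ∈ M.step s c) (hs : M.tape s = 0) (h : M.Run t ![u, v] f) :
    M.Run s ![c :: u, v] f := by
  refine Run.step (rest := u) ht (by simp [hs]) ?_
  convert h using 1
  funext i
  fin_cases i <;> simp [hs]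

lemma Run.step₁ {s t f : M.State} {c : Option A} {u v : List (Option A)}
    (ht : t ∈ M.step s c) (hs : M.tape s = 1) (h : M.Run t ![u, v] f) :
    M.Run s ![u, c :: v] f := by
  refine Run.step (rest := v) ht (by simp [hs]) ?_
  convert h using 1
  funext i
  fin_cases i <;> simp [hs]

lemma Run.nil₂ (s : M.State) : M.Run s ![[], []] s := by
  convert Run.nil s using 1
  funext i
  fin_cases i <;> rfl

lemma accepts_iff_run {w : Fin 2 → List A} :
    M.Accepts w ↔ ∃ s₀ ∈ M.start, ∃ f ∈ M.accept, M.Run s₀ ![pad (w 0), pad (w 1)] f := by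
  have : (fun i => pad (w i)) = ![pad (w 0), pad (w 1)] := by
    funext i
    fin_cases i <;> rfl
  simp only [Accepts, ← this]
  rfl

lemma accepts_append_iff {x y z : List A} :
    M.Accepts ![x, y ++ z] ↔ ∃ q u₁ u₂, u₁ ++ u₂ = pad x ∧
      (∃ s₀ ∈ M.start, M.Run s₀ ![u₁, y.map some] q) ∧ ∃ f ∈ M.accept, M.Run q ![u₂, pad z] f := by
  simp only [accepts_iff_run, Matrix.cons_val_zero, Matrix.cons_val_one, pad_append]
  constructor
  · rintro ⟨s₀, hs₀, f, hf, h⟩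
    obtain ⟨q, r₁, r₂, hr, h₁, h₂, hrun₁, hrun₂⟩ := h.exists_split 1 rfl
    have hr₀ := congrFun hr 0
    refine ⟨q, r₁ 0, r₂ 0, hr₀.symm, ⟨s₀, hs₀, ?_⟩, f, hf, ?_⟩
    · convert hrun₁ using 1
      funext i
      fin_cases i <;> simp [h₁]
    · convert hrun₂ using 1
      funext i
      fin_cases i <;> simp [h₂]
  · rintro ⟨q, u₁, u₂, hu, ⟨s₀, hs₀, h₁⟩, f, hf, h₂⟩
    refine ⟨s₀, hs₀, f, hf, ?_⟩
    convert h₁.append h₂ using 1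
    funext i
    fin_cases i <;> simp [hu]

theorem exists_ne_accepts_append (x y z : ℕ → List A)
    (h : ∀ k, M.Accepts ![x k, y k ++ z k]) :
    ∃ k l, k ≠ l ∧ ∃ x', M.Accepts ![x', y k ++ z l] := by
  choose q u₁ u₂ hu hpre hsuf using fun k => accepts_append_iff.1 (h k)
  have := M.fintype
  obtain ⟨k, l, hkl, hkl'⟩ :=
    Finite.exists_ne_map_eq_of_infinite fun k => (q k, none ∈ u₁ k)
  simp only [Prod.mk.injEq] at hkl'
  obtain ⟨x', hx'⟩ := exists_append_eq_pad (hu k) (hu l) hkl'.2.to_iff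
  exact ⟨k, l, hkl, x', accepts_append_iff.2 ⟨q k, _, _, hx', hpre k, hkl'.1 ▸ hsuf l⟩⟩

end TwoTapes

end SAA

open SAA

def unbalanced : Set (Fin 2 → List Bool) :=
  {w | ∃ b, (w 0).length ≠ (w 1).count b}

namespace Unbalanced

/-- `scan b`: the letters read so far on tape 0 and the letters `b` read so far on tape 1
are equally many; `owe b`: tape 0 is one letter ahead; `seek b`: tape 0 is exhausted while
the counts agree. -/
inductive State
  | scan (b : Bool)
  | owe (b : Bool)
  | seek (b : Bool)
  | drain (i : Fin 2)
  | done
  deriving DecidableEq, Fintype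

open State

def tape : State → Fin 2
  | scan _ => 0
  | owe _ => 1
  | seek _ => 1
  | drain i => i
  | done => 0

def step : State → Option Bool → Set State
  | scan b, some _ => {owe b}
  | scan b, none => {seek b}
  | owe b, some c => if c = b then {scan b} else {owe b}
  | owe _, none => {drain 0}
  | seek b, some c => if c = b then {drain 1} else {seek b}
  | seek _, none => ∅
  | drain i, some _ => {drain i}
  | drain _, none => {done}
  | done, _ => ∅

def saa : SAA Bool 2 where
  State := State
  fintype := inferInstance
  start := Set.range scan
  accept := {done}
  step := step
  eps := fun _ => ∅
  tape := tape

/-- What an accepting run from each state guarantees about the remaining tape contents. -/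
def Sound : State → List (Option Bool) → List (Option Bool) → Prop
  | scan b, u, v => ∀ x y, u = pad x → v = pad y → x.length ≠ y.count b
  | owe b, u, v => ∀ x y, u = pad x → v = pad y → x.length + 1 ≠ y.count b
  | seek b, _, v => ∀ y, v = pad y → y.count b ≠ 0
  | drain _, _, _ => True
  | done, _, _ => True

lemma Sound.of_step {s t : State} {c : Option Bool} {rest : List (Option Bool)}
    {r : Fin 2 → List (Option Bool)} (ht : t ∈ step s c) (hr : r (tape s) = c :: rest)
    (h : Sound t (Function.update r (tape s) rest 0) (Function.update r (tape s) rest 1)) :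
    Sound s (r 0) (r 1) := by
  cases s with
  | scan b =>
    simp only [tape, Function.update_self, Function.update_of_ne one_ne_zero] at hr h
    intro x y hx hy
    rw [hr] at hx
    cases c with
    | none =>
      obtain rfl : t = seek b := ht
      obtain ⟨rfl, -⟩ := none_cons_eq_pad.1 hx
      exact (h y hy).symm
    | some a =>
      obtain rfl : t = owe b := ht
      obtain ⟨x, rfl, rfl⟩ := some_cons_eq_pad.1 hx
      exact h x y rfl hy
  | owe b =>
    simp only [tape, Function.update_self, Function.update_of_ne zero_ne_one] at hr h
    intro x y hx hy
    rw [hr] at hy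
    cases c with
    | none =>
      obtain ⟨rfl, -⟩ := none_cons_eq_pad.1 hy
      simp
    | some a =>
      obtain ⟨y, rfl, rfl⟩ := some_cons_eq_pad.1 hy
      by_cases hab : a = b
      · subst hab
        obtain rfl : t = scan a := by simpa [step] using ht
        simpa using h x y hx rfl
      · obtain rfl : t = owe b := by simpa [step, hab] using ht
        simpa [hab] using h x y hx rfl
  | seek b =>
    simp only [tape, Function.update_self] at hr h
    intro y hy
    rw [hr] at hy
    cases c with
    | none => exact ht.elim
    | some a =>
      obtain ⟨y, rfl, rfl⟩ := some_cons_eq_pad.1 hy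
      by_cases hab : a = b
      · simp [hab]
      · obtain rfl : t = seek b := by simpa [step, hab] using ht
        simpa [hab] using h y rfl
  | drain _ | done => trivial

theorem Sound.of_run {s f : saa.State} {r : Fin 2 → List (Option Bool)} (h : saa.Run s r f)
    (hf : f = done) : Sound s (r 0) (r 1) := by
  induction h with
  | nil s => subst hf; trivial
  | eps ht => exact ht.elim
  | step ht hr _ ih => exact Sound.of_step ht hr (ih hf)

lemma run_drain₀ (x : List Bool) : saa.Run (drain 0) ![pad x, []] done := by
  induction x with
  | nil => exact Run.step₀ (c := none) rfl rfl (Run.nil₂ _)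
  | cons a x ih => exact Run.step₀ rfl rfl ih

lemma run_drain₁ (y : List Bool) : saa.Run (drain 1) ![[], pad y] done := by
  induction y with
  | nil => exact Run.step₁ (c := none) rfl rfl (Run.nil₂ _)
  | cons a y ih => exact Run.step₁ rfl rfl ih

lemma run_seek {b : Bool} {y : List Bool} (hy : y.count b ≠ 0) :
    saa.Run (seek b) ![[], pad y] done := by
  induction y with
  | nil => simp at hy
  | cons a y ih =>
    by_cases hab : a = b
    · exact Run.step₁ (by simp only [saa, step, if_pos hab]; rfl) rfl (run_drain₁ y)
    · exact Run.step₁ (by simp only [saa, step, if_neg hab]; rfl) rfl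
        (ih (by simpa [hab] using hy))

lemma run_owe {b : Bool} {x : List Bool}
    (hscan : ∀ y : List Bool, x.length ≠ y.count b → saa.Run (scan b) ![pad x, pad y] done)
    {y : List Bool} (hy : x.length + 1 ≠ y.count b) :
    saa.Run (owe b) ![pad x, pad y] done := by
  induction y with
  | nil => exact Run.step₁ (c := none) rfl rfl (run_drain₀ x)
  | cons a y ih =>
    by_cases hab : a = b
    · exact Run.step₁ (by simp only [saa, step, if_pos hab]; rfl) rfl
        (hscan y (by simpa [hab] using hy))
    · exact Run.step₁ (by simp only [saa, step, if_neg hab]; rfl) rfl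
        (ih (by simpa [hab] using hy))

lemma run_scan {b : Bool} {x y : List Bool} (h : x.length ≠ y.count b) :
    saa.Run (scan b) ![pad x, pad y] done := by
  induction x generalizing y with
  | nil => exact Run.step₀ (c := none) rfl rfl (run_seek (Ne.symm h))
  | cons a x ih => exact Run.step₀ rfl rfl (run_owe (fun _ => ih) h)

end Unbalanced

open Unbalanced State in
theorem isWeaklyRegular_unbalanced : IsWeaklyRegular unbalanced := by
  refine ⟨saa, fun w => ⟨fun ⟨b, hb⟩ => ?_, fun hw => ?_⟩⟩
  · exact accepts_iff_run.2 ⟨scan b, ⟨b, rfl⟩, done, rfl, run_scan hb⟩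
  · obtain ⟨_, ⟨b, rfl⟩, f, hf, h⟩ := accepts_iff_run.1 hw
    exact ⟨b, Sound.of_run h hf _ _ rfl rfl⟩

theorem not_isWeaklyRegular_compl_unbalanced : ¬ IsWeaklyRegular unbalancedᶜ := by
  rintro ⟨M, hM⟩
  have hbalanced (k : ℕ) :
      M.Accepts ![.replicate k false, .replicate k false ++ .replicate k true] :=
    (hM _).1 (by simp [unbalanced, List.count_replicate])
  obtain ⟨k, l, hkl, x, hx⟩ := M.exists_ne_accepts_append _ _ _ hbalanced
  have hcount : ∀ b, x.length = (.replicate k false ++ .replicate l true : List Bool).count b := by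
    simpa [unbalanced] using (hM _).2 hx
  have h₀ : x.length = k := by simpa [unbalanced, List.count_replicate] using hcount false
  have h₁ : x.length = l := by simpa [unbalanced, List.count_replicate] using hcount true
  omega

/-- Weakly regular languages are not closed under complementation: there are a
finite alphabet `A` and a weakly regular two-variable language `L` over `A` whose
complement is not weakly regular. -/
theorem weaklyRegular_not_closed_under_compl :
    ∃ (A : Type) (_ : Fintype A) (L : Set (Fin 2 → List A)),
      IsWeaklyRegular L ∧ ¬ IsWeaklyRegular Lᶜ :=
  ⟨Bool, inferInstance, unbalanced, isWeaklyRegular_unbalanced,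
    not_isWeaklyRegular_compl_unbalanced⟩
end

section
/- Assume Axioms (1)-(12) hold for L, L_epsilon, and the family (L_x), and let phi_x : X -> X (for x in A) be the unique bijections satisfying phi_x([u]) = [v] if and only if (u, v) in L_x. Then the subgroup H of the symmetric group of X generated by {phi_x : x in A} acts transitively on X: for all u, v in L there exists h in H with h([u]) = [v]. -/
/-- The set `X = L/∼` of equivalence classes of words of `L` under the relation
`u ∼ v ↔ (u, v) ∈ L_ε` (under Axioms (3)–(5) this relation is an equivalence
relation, and then the quotient `Quot` coincides with the usual quotient). -/
def ClassesOf {A : Type} (L : Set (List A)) (Leps : Set (List A × List A)) : Type :=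
  Quot fun u v : { w : List A // w ∈ L } => ((u : List A), (v : List A)) ∈ Leps

/-- The equivalence class `[u] ∈ X` of a word `u ∈ L`. -/
def cls {A : Type} (L : Set (List A)) (Leps : Set (List A × List A))
    (u : { w : List A // w ∈ L }) : ClassesOf L Leps :=
  Quot.mk _ u

/-- `PhiRel Lx u w z` formalizes the statement `[u] φ_w = [z]`: for a word
`w = σ₁ ⋯ σ_k` over `A` it asserts the existence of intermediate words
`v₁, …, v_{k-1}` with `(u, v₁) ∈ L_{σ₁}`, `(v₁, v₂) ∈ L_{σ₂}`, …,
`(v_{k-1}, z') ∈ L_{σ_k}` and `[z'] = [z]` (for the empty word it asserts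
`[u] = [z]`, i.e. `(u, z) ∈ L_ε`). -/
def PhiRel {A : Type} (Lx : Option A → Set (List A × List A)) :
    List A → List A → List A → Prop
  | u, [], z => (u, z) ∈ Lx none
  | u, x :: w, z => ∃ v, (u, v) ∈ Lx (some x) ∧ PhiRel Lx v w z

/-!
Fix a base word `t ∈ L` with `[t] φ_u = [u]`; it exists because every `L_x` is onto `L`
(Axiom (9)), so one can walk `u` backwards letter by letter. Axiom (12) with empty prefix turns
`[t] φ_u = [u]` into `[t] φ_v = [v]`. Reading `φ_u` and `φ_v` as products of the generators `φ_x`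
gives `h₁, h₂ ∈ H` with `h₁ [t] = [u]` and `h₂ [t] = [v]`, so `h₂ h₁⁻¹ [u] = [v]`.
-/

namespace PhiRel

variable {A : Type} {L : Set (List A)} {Lx : Option A → Set (List A × List A)}

theorem exists_mem_start
    (hfst : ∀ x : A, ∀ p ∈ Lx (some x), p.1 ∈ L)
    (hrefl : ∀ w ∈ L, (w, w) ∈ Lx none)
    (hsurj : ∀ x : A, ∀ v ∈ L, ∃ u, (u, v) ∈ Lx (some x)) :
    ∀ (w : List A), ∀ z ∈ L, ∃ t ∈ L, PhiRel Lx t w z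
  | [], z, hz => ⟨z, hz, hrefl z hz⟩
  | x :: w, z, hz => by
    obtain ⟨t', ht'L, ht'⟩ := exists_mem_start hfst hrefl hsurj w z hz
    obtain ⟨t, ht⟩ := hsurj x t' ht'L
    exact ⟨t, hfst x _ ht, t', ht, ht'⟩

theorem exists_mem_closure_apply_eq
    (hsnd : ∀ x : A, ∀ p ∈ Lx (some x), p.2 ∈ L)
    (φ : A → Equiv.Perm (ClassesOf L (Lx none)))
    (hφ : ∀ x : A, ∀ u v : { w : List A // w ∈ L },
      (φ x (cls L (Lx none) u) = cls L (Lx none) v ↔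
        ((u : List A), (v : List A)) ∈ Lx (some x))) :
    ∀ (w : List A) (t z : { w : List A // w ∈ L }), PhiRel Lx t w z →
      ∃ h ∈ Subgroup.closure (Set.range φ), h (cls L (Lx none) t) = cls L (Lx none) z
  | [], _, _, htz => ⟨1, one_mem _, Quot.sound htz⟩
  | x :: w, t, z, ⟨v, htv, hvz⟩ => by
    have hvL : v ∈ L := hsnd x _ htv
    obtain ⟨g, hg, hgz⟩ := exists_mem_closure_apply_eq hsnd φ hφ w ⟨v, hvL⟩ z hvz
    refine ⟨g * φ x, mul_mem hg (Subgroup.subset_closure ⟨x, rfl⟩), ?_⟩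
    rw [Equiv.Perm.mul_apply, (hφ x t ⟨v, hvL⟩).2 htv, hgz]

end PhiRel

theorem multiplier_group_acts_transitively_general {A : Type}
    (L : Set (List A)) (Lx : Option A → Set (List A × List A))
    (ax2 : ∀ x : Option A, ∀ p ∈ Lx x, p.1 ∈ L ∧ p.2 ∈ L)
    (ax3 : ∀ w ∈ L, (w, w) ∈ Lx none)
    (ax9 : ∀ x : A, ∀ v ∈ L, ∃ u, (u, v) ∈ Lx (some x))
    (ax12 : ∀ u w w' : List A, u ++ w ∈ L → u ++ w' ∈ L →
      ∀ v ∈ L, (PhiRel Lx v w (u ++ w) ↔ PhiRel Lx v w' (u ++ w')))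
    (φ : A → Equiv.Perm (ClassesOf L (Lx none)))
    (hφ : ∀ x : A, ∀ u v : { w : List A // w ∈ L },
      (φ x (cls L (Lx none) u) = cls L (Lx none) v ↔
        ((u : List A), (v : List A)) ∈ Lx (some x))) :
    ∀ u v : { w : List A // w ∈ L },
      ∃ h ∈ Subgroup.closure (Set.range φ),
        h (cls L (Lx none) u) = cls L (Lx none) v := by
  intro u v
  obtain ⟨t, htL, htu⟩ :=
    PhiRel.exists_mem_start (fun x p hp => (ax2 (some x) p hp).1) ax3 ax9 u.1 u.1 u.2
  have htv : PhiRel Lx t v v := (ax12 [] u v u.2 v.2 t htL).1 htu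
  have hsnd : ∀ x : A, ∀ p ∈ Lx (some x), p.2 ∈ L := fun x p hp => (ax2 (some x) p hp).2
  obtain ⟨h₁, hh₁, htu'⟩ := PhiRel.exists_mem_closure_apply_eq hsnd φ hφ u ⟨t, htL⟩ u htu
  obtain ⟨h₂, hh₂, htv'⟩ := PhiRel.exists_mem_closure_apply_eq hsnd φ hφ v ⟨t, htL⟩ v htv
  refine ⟨h₂ * h₁⁻¹, mul_mem hh₂ (inv_mem hh₁), ?_⟩
  rw [Equiv.Perm.mul_apply, Equiv.Perm.inv_eq_iff_eq.2 htu'.symm, htv']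

/-- Assuming Axioms (1)–(12), the subgroup `H` of the symmetric group of
`X = L/∼` generated by the bijections `φ_x` (given here as permutations `φ x`
characterized by `φ x [u] = [v] ↔ (u, v) ∈ L_x`) acts transitively on `X`:
for all `u, v ∈ L` there is `h ∈ H` with `h [u] = [v]`. -/
theorem multiplier_group_acts_transitively {A : Type} [Fintype A]
    (L : Set (List A)) (Lx : Option A → Set (List A × List A))
    (ax1 : L.Nonempty)
    (ax2 : ∀ x : Option A, ∀ p ∈ Lx x, p.1 ∈ L ∧ p.2 ∈ L)
    (ax3 : ∀ w ∈ L, (w, w) ∈ Lx none)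
    (ax4 : ∀ u v : List A, (u, v) ∈ Lx none → (v, u) ∈ Lx none)
    (ax5 : ∀ u v w : List A, (u, v) ∈ Lx none → (v, w) ∈ Lx none → (u, w) ∈ Lx none)
    (ax6 : ∀ x : A, ∀ u ∈ L, ∃ v, (u, v) ∈ Lx (some x))
    (ax7 : ∀ x : A, ∀ u v w : List A,
      (u, v) ∈ Lx (some x) → (v, w) ∈ Lx none → (u, w) ∈ Lx (some x))
    (ax8 : ∀ x : A, ∀ u v w : List A,
      (u, v) ∈ Lx none → (u, w) ∈ Lx (some x) → (v, w) ∈ Lx (some x))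
    (ax9 : ∀ x : A, ∀ v ∈ L, ∃ u, (u, v) ∈ Lx (some x))
    (ax10 : ∀ x : A, ∀ u v w : List A,
      (u, v) ∈ Lx (some x) → (u, w) ∈ Lx none → (w, v) ∈ Lx (some x))
    (ax11 : ∀ x : A, ∀ u v w : List A,
      (u, v) ∈ Lx none → (w, u) ∈ Lx (some x) → (w, v) ∈ Lx (some x))
    (ax12 : ∀ u w w' : List A, u ++ w ∈ L → u ++ w' ∈ L →
      ∀ v ∈ L, (PhiRel Lx v w (u ++ w) ↔ PhiRel Lx v w' (u ++ w')))
    (φ : A → Equiv.Perm (ClassesOf L (Lx none)))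
    (hφ : ∀ x : A, ∀ u v : { w : List A // w ∈ L },
      (φ x (cls L (Lx none) u) = cls L (Lx none) v ↔
        ((u : List A), (v : List A)) ∈ Lx (some x))) :
    ∀ u v : { w : List A // w ∈ L },
      ∃ h ∈ Subgroup.closure (Set.range φ),
        h (cls L (Lx none) u) = cls L (Lx none) v :=
  multiplier_group_acts_transitively_general L Lx ax2 ax3 ax9 ax12 φ hφ
end
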